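/- arXiv:1401.3523 — 2 statements merged into one kernel-verified Lean document; each statement's English description precedes it below -/
import Mathlib

section
/- Let G be a totally disconnected locally compact group, φ : G → G a topological automorphism, and U an open compact subgroup. Then H_top(φ⁻¹, U) = H_top(φ, U) − log Δ(φ), where Δ(φ) is the modulus of φ. -/
open Filter Topology MeasureTheory

variable {G : Type*} [Group G]

/-- The `n`-th `φ`-cotrajectory `Cₙ(φ,U) = ⋂_{i<n} φ^{-i}(U)`. -/
def cotrajN (φ : MulAut G) (U : Subgroup G) (n : ℕ) : Subgroup G :=
  ⨅ i ∈ Finset.range n, Subgroup.comap (φ ^ i).toMonoidHom U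

/-- `cₙ = [U : Cₙ(φ,U)]`. -/
noncomputable def entIdx (φ : MulAut G) (U : Subgroup G) (n : ℕ) : ℕ :=
  (cotrajN φ U n).relIndex U

/-- The topological entropy of `φ` with respect to `U`,
`H_top(φ,U) = lim_n log cₙ / n` (the limit exists, so it equals the `limsup`). -/
noncomputable def Htop (φ : MulAut G) (U : Subgroup G) : ℝ :=
  limsup (fun n : ℕ => Real.log (entIdx φ U n) / n) atTop

/-- The `φ`-cotrajectory `C(φ,U) = ⋂_{n≥0} φ^{-n}(U)`. -/
def cotraj (φ : MulAut G) (U : Subgroup G) : Subgroup G :=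
  ⨅ n : ℕ, Subgroup.comap (φ ^ n).toMonoidHom U

/-- The topological entropy `h_top(φ) = sup {H_top(φ,U) : U open compact subgroup}`. -/
noncomputable def htop [TopologicalSpace G] (φ : MulAut G) : EReal :=
  ⨆ (U : Subgroup G) (_ : IsOpen (U : Set G) ∧ IsCompact (U : Set G)), ((Htop φ U : ℝ) : EReal)

/-!
Write `Vₙ = Cₙ(φ, U)` and `Wₙ = Cₙ(φ⁻¹, U)`. Reindexing the intersection shows
`Wₘ₊₁ = φ ^ m (Vₘ₊₁)`, so `μ Wₘ₊₁ = Δ ^ m μ Vₘ₊₁`. A subgroup of finite index in `U` has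
`μ U = [U : V] μ V`, hence `[U : Vₘ₊₁] = Δ ^ m [U : Wₘ₊₁]`. Taking logarithms and dividing by
`m + 1`, the sequence defining `H_top(φ⁻¹, U)` is the one defining `H_top(φ, U)` plus a term
tending to `-log Δ`; the `limsup` splits because `log cₙ / n` stays between `0` and
`log [U : U ∩ φ⁻¹ U]`.
-/

open scoped ENNReal Pointwise

section LimsupAdd

variable {ι α : Type*} [AddCommGroup α] [ConditionallyCompleteLinearOrder α] [DenselyOrdered α]
  [AddLeftMono α] [TopologicalSpace α] [OrderTopology α] {f : Filter ι} [f.NeBot]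

theorem Filter.limsup_add_of_tendsto {u v : ι → α} {a : α} (hu : IsBoundedUnder (· ≤ ·) f u)
    (hu' : IsBoundedUnder (· ≥ ·) f u) (hv : Tendsto v f (𝓝 a)) :
    limsup (u + v) f = limsup u f + a := by
  apply le_antisymm
  · simpa only [hv.limsup_eq] using
      limsup_add_le hu' hu hv.isCoboundedUnder_le hv.isBoundedUnder_le
  · simpa only [hv.liminf_eq] using
      le_limsup_add hu hu'.isCoboundedUnder_le hv.isBoundedUnder_le hv.isBoundedUnder_ge

end LimsupAdd

namespace Subgroup

variable [MeasurableSpace G]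

theorem comap_subtype_apply_subgroupOf {H K : Subgroup G} (hHK : H ≤ K)
    (hK : MeasurableSet (K : Set G)) (μ : Measure G) :
    μ.comap K.subtype (H.subgroupOf K) = μ H := by
  have hK' : MeasurableEmbedding ((↑) : K → G) := MeasurableEmbedding.subtype_coe hK
  rw [coe_subgroupOf, coe_subtype, hK'.comap_apply,
    Set.image_preimage_eq_inter_range, Subtype.range_coe, Set.inter_eq_left.mpr hHK]

variable [MeasurableMul G]

instance measurableMul (K : Subgroup G) : MeasurableMul K :=
  ⟨fun k => ((measurable_const_mul (k : G)).comp measurable_subtype_coe).subtype_mk,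
    fun k => ((measurable_mul_const (k : G)).comp measurable_subtype_coe).subtype_mk⟩

theorem finiteIndex_of_measure_ne_zero (H : Subgroup G) (hH : MeasurableSet (H : Set G))
    (μ : Measure G) [μ.IsMulLeftInvariant] (hμ : μ Set.univ ≠ ⊤) (hH0 : μ H ≠ 0) :
    H.FiniteIndex := by
  obtain ⟨s, hs, -⟩ := H.exists_isComplement_left 1
  rw [← hs.finite_left_iff, ← not_infinite_iff_finite]
  intro
  have hcosets := tsum_meas_le_meas_iUnion_of_disjoint μ (fun a : s => hH.const_smul a.val)
    fun a b hab => hs.pairwiseDisjoint_smul a.2 b.2 (Subtype.val_injective.ne hab)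
  rw [funext fun a : s => measure_smul μ a.val (H : Set G),
    ENNReal.tsum_const_eq_top_of_ne_zero hH0] at hcosets
  exact hμ (top_unique (hcosets.trans (measure_mono (Set.subset_univ _))))

variable {H K : Subgroup G} (hHK : H ≤ K) (hK : MeasurableSet (K : Set G)) (μ : Measure G)
  [μ.IsMulLeftInvariant] (hH : MeasurableSet (H : Set G))
include hHK hK hH

theorem isFiniteRelIndex_of_measure_ne_zero (hμK : μ K ≠ ⊤) (hH0 : μ H ≠ 0) :
    H.IsFiniteRelIndex K := by
  have hK' : MeasurableEmbedding ((↑) : K → G) := MeasurableEmbedding.subtype_coe hK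
  have := Measure.IsMulLeftInvariant.comap μ (f := K.subtype) hK'
  rw [isFiniteRelIndex_iff_finiteIndex]
  refine (H.subgroupOf K).finiteIndex_of_measure_ne_zero (hH.preimage measurable_subtype_coe)
    (μ.comap K.subtype) ?_ ?_
  · rwa [coe_subtype, hK'.comap_apply, Set.image_univ, Subtype.range_coe]
  · rwa [comap_subtype_apply_subgroupOf hHK hK]

theorem relIndex_mul_measure [H.IsFiniteRelIndex K] : H.relIndex K * μ H = μ K := by
  have hK' : MeasurableEmbedding ((↑) : K → G) := MeasurableEmbedding.subtype_coe hK
  have := Measure.IsMulLeftInvariant.comap μ (f := K.subtype) hK'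
  have h := (H.subgroupOf K).index_mul_measure (hH.preimage measurable_subtype_coe)
    (μ.comap K.subtype)
  rwa [comap_subtype_apply_subgroupOf hHK hK, coe_subtype, hK'.comap_apply, Set.image_univ,
    Subtype.range_coe] at h

end Subgroup

section Cotrajectory

variable (φ : MulAut G) (U : Subgroup G)

theorem mem_cotrajN {n : ℕ} {x : G} : x ∈ cotrajN φ U n ↔ ∀ i < n, (φ ^ i) x ∈ U := by
  simp [cotrajN, Subgroup.mem_iInf]

theorem cotrajN_one : cotrajN φ U 1 = U := by
  ext x
  simp [mem_cotrajN]

theorem cotrajN_succ (n : ℕ) :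
    cotrajN φ U (n + 1) = cotrajN φ U n ⊓ U.comap (φ ^ n).toMonoidHom := by
  rw [cotrajN, Finset.range_add_one, Finset.iInf_insert, inf_comm, cotrajN]

theorem cotrajN_succ_le (n : ℕ) : cotrajN φ U (n + 1) ≤ U := fun x hx => by
  simpa using (mem_cotrajN φ U).1 hx 0 n.succ_pos

theorem pow_mul_inv_pow_of_le {M : Type*} [Group M] (a : M) {i m : ℕ} (h : i ≤ m) :
    a ^ i * (a ^ m)⁻¹ = a⁻¹ ^ (m - i) := by
  rw [← inv_inv (a ^ i * _), mul_inv_rev, inv_inv, ← pow_sub a h, inv_pow]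

theorem cotrajN_inv_succ (m : ℕ) :
    cotrajN φ⁻¹ U (m + 1) = (cotrajN φ U (m + 1)).map (φ ^ m).toMonoidHom := by
  ext x
  have key : ∀ i ≤ m, (φ ^ i) ((φ ^ m).symm x) = (φ⁻¹ ^ (m - i)) x := fun i hi => by
    rw [← MulAut.inv_apply, ← MulAut.mul_apply, pow_mul_inv_pow_of_le φ hi]
  simp only [Subgroup.mem_map_equiv, mem_cotrajN, Nat.lt_succ_iff]
  constructor
  · intro h i hi
    rw [key i hi]
    exact h _ (m.sub_le i)
  · intro h i hi
    rw [← Nat.sub_sub_self hi, ← key _ (m.sub_le i)]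
    exact h _ (m.sub_le i)

theorem entIdx_succ_succ_le (hφU : (U.comap φ.toMonoidHom).relIndex U ≠ 0) (n : ℕ) :
    entIdx φ U (n + 2) ≤ entIdx φ U (n + 1) * (U.comap φ.toMonoidHom).relIndex U := by
  have hshift : U.comap (φ ^ (n + 1)).toMonoidHom
      = (U.comap φ.toMonoidHom).comap (φ ^ n).toMonoidHom := by
    rw [Subgroup.comap_comap, pow_succ']
    rfl
  have hstep : (U.comap (φ ^ (n + 1)).toMonoidHom).relIndex (U.comap (φ ^ n).toMonoidHom)
      = (U.comap φ.toMonoidHom).relIndex U := by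
    rw [hshift, Subgroup.relIndex_comap,
      Subgroup.map_comap_eq_self_of_surjective (φ ^ n).surjective]
  have hle : cotrajN φ U (n + 1) ≤ U.comap (φ ^ n).toMonoidHom := fun x hx =>
    (mem_cotrajN φ U).1 hx n n.lt_succ_self
  rw [entIdx, entIdx, cotrajN_succ φ U (n + 1),
    ← Subgroup.relIndex_mul_relIndex _ _ _ inf_le_left (cotrajN_succ_le φ U n),
    Subgroup.inf_relIndex_left, ← hstep]
  exact (Nat.mul_le_mul_right _ (Subgroup.relIndex_le_of_le_right hle (hstep ▸ hφU))).trans_eq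
    (mul_comm _ _)

theorem entIdx_succ_le_pow (hφU : (U.comap φ.toMonoidHom).relIndex U ≠ 0) (n : ℕ) :
    entIdx φ U (n + 1) ≤ (U.comap φ.toMonoidHom).relIndex U ^ n := by
  induction n with
  | zero => simp [entIdx, cotrajN_one]
  | succ n ih =>
    calc entIdx φ U (n + 2) ≤ entIdx φ U (n + 1) * (U.comap φ.toMonoidHom).relIndex U :=
          entIdx_succ_succ_le φ U hφU n
      _ ≤ _ := by rw [pow_succ]; gcongr

end Cotrajectory

section Topological

variable [TopologicalSpace G]

theorem MulAut.continuous_pow {φ : MulAut G} (hφ : Continuous φ) (n : ℕ) :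
    Continuous ⇑(φ ^ n) := by
  induction n with
  | zero => exact continuous_id
  | succ n ih => rw [pow_succ]; exact ih.comp hφ

theorem isOpen_cotrajN {φ : MulAut G} (hφ : Continuous φ) {U : Subgroup G}
    (hU : IsOpen (U : Set G)) (n : ℕ) : IsOpen (cotrajN φ U n : Set G) := by
  simp only [cotrajN, Subgroup.coe_iInf, Subgroup.coe_comap]
  exact isOpen_biInter_finset fun i _ => hU.preimage (MulAut.continuous_pow hφ i)

variable [IsTopologicalGroup G]

theorem Subgroup.isFiniteRelIndex_of_isOpen_of_isCompact {H K : Subgroup G}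
    (hH : IsOpen (H : Set G)) (hK : IsCompact (K : Set G)) : H.IsFiniteRelIndex K := by
  have : CompactSpace K := isCompact_iff_compactSpace.mp hK
  rw [isFiniteRelIndex_iff_finiteIndex]
  have := (H.subgroupOf K).quotient_finite_of_isOpen (hH.preimage continuous_subtype_val)
  exact finiteIndex_of_finite_quotient

theorem entIdx_ne_zero {φ : MulAut G} (hφ : Continuous φ) {U : Subgroup G}
    (hUo : IsOpen (U : Set G)) (hUc : IsCompact (U : Set G)) (n : ℕ) : entIdx φ U n ≠ 0 :=
  (Subgroup.isFiniteRelIndex_of_isOpen_of_isCompact (isOpen_cotrajN hφ hUo n) hUc).relIndex_ne_zero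

end Topological

theorem MulAut.measure_image_pow [MeasurableSpace G] {μ : Measure G} {φ : MulAut G} {c : ℝ≥0∞}
    (hφ : ∀ s : Set G, μ (φ '' s) = c * μ s) (m : ℕ) (s : Set G) :
    μ (⇑(φ ^ m) '' s) = c ^ m * μ s := by
  induction m generalizing s with
  | zero => simp
  | succ m ih =>
    rw [pow_succ, MulAut.coe_mul, Set.image_comp, ih, hφ, pow_succ, mul_assoc]

theorem entIdx_eq_entIdx_inv_mul [TopologicalSpace G] [IsTopologicalGroup G] [T2Space G]
    [MeasurableSpace G] [BorelSpace G] (μ : Measure G) [μ.IsHaarMeasure] {φ : MulAut G}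
    (hφ : Continuous φ) {c : ℝ≥0∞} (hc : c ≠ 0) (hmod : ∀ s : Set G, μ (φ '' s) = c * μ s)
    {U : Subgroup G} (hUo : IsOpen (U : Set G)) (hUc : IsCompact (U : Set G)) (m : ℕ) :
    (entIdx φ U (m + 1) : ℝ≥0∞) = entIdx φ⁻¹ U (m + 1) * c ^ m := by
  set V := cotrajN φ U (m + 1)
  set W := cotrajN φ⁻¹ U (m + 1)
  have hVU : V ≤ U := cotrajN_succ_le φ U m
  have hWU : W ≤ U := cotrajN_succ_le φ⁻¹ U m
  have hVo : IsOpen (V : Set G) := isOpen_cotrajN hφ hUo _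
  have hVc : IsCompact (V : Set G) := hUc.of_isClosed_subset (V.isClosed_of_isOpen hVo) hVU
  have hWV : (W : Set G) = ⇑(φ ^ m) '' V := by
    rw [show W = V.map (φ ^ m).toMonoidHom from cotrajN_inv_succ φ U m, Subgroup.coe_map]
    rfl
  -- `W` is the image of a compact set, hence closed; its finite index in `U` comes from its
  -- positive measure.
  have hWm : MeasurableSet (W : Set G) :=
    (hWV ▸ hVc.image (MulAut.continuous_pow hφ m)).isClosed.measurableSet
  have hμV0 : μ V ≠ 0 := hVo.measure_ne_zero μ ⟨1, V.one_mem⟩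
  have hμVtop : μ V ≠ ⊤ := hVc.measure_ne_top
  have hμW : μ W = c ^ m * μ V := hWV ▸ MulAut.measure_image_pow hmod m _
  have := Subgroup.isFiniteRelIndex_of_isOpen_of_isCompact hVo hUc
  have := Subgroup.isFiniteRelIndex_of_measure_ne_zero hWU hUo.measurableSet μ hWm
    hUc.measure_ne_top (hμW ▸ mul_ne_zero (pow_ne_zero m hc) hμV0)
  have hμUV := V.relIndex_mul_measure hVU hUo.measurableSet μ hVo.measurableSet
  have hμUW := W.relIndex_mul_measure hWU hUo.measurableSet μ hWm
  rw [← hμUW, hμW, ← mul_assoc] at hμUV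
  exact (ENNReal.mul_left_inj hμV0 hμVtop).mp hμUV

theorem Htop_eq_limsup_succ (φ : MulAut G) (U : Subgroup G) :
    Htop φ U = limsup (fun n : ℕ => Real.log (entIdx φ U (n + 1)) / ↑(n + 1)) atTop :=
  (limsup_nat_add (fun n : ℕ => Real.log (entIdx φ U n) / n) 1).symm

theorem log_entIdx_succ_div_le (φ : MulAut G) (U : Subgroup G)
    (hφU : (U.comap φ.toMonoidHom).relIndex U ≠ 0) (n : ℕ) :
    Real.log (entIdx φ U (n + 1)) / ↑(n + 1) ≤ Real.log ((U.comap φ.toMonoidHom).relIndex U) := by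
  have hlog :
      Real.log (entIdx φ U (n + 1)) ≤ n * Real.log ((U.comap φ.toMonoidHom).relIndex U) := by
    rcases (entIdx φ U (n + 1)).eq_zero_or_pos with h | h
    · rw [h, Nat.cast_zero, Real.log_zero]
      exact mul_nonneg n.cast_nonneg (Real.log_natCast_nonneg _)
    · rw [← Real.log_pow]
      exact Real.log_le_log (by exact_mod_cast h) (by exact_mod_cast entIdx_succ_le_pow φ U hφU n)
  rw [div_le_iff₀ (by positivity), Nat.cast_succ, mul_comm]
  nlinarith [Real.log_natCast_nonneg ((U.comap φ.toMonoidHom).relIndex U)]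

theorem log_entIdx_inv_succ [TopologicalSpace G] [IsTopologicalGroup G] [T2Space G]
    [MeasurableSpace G] [BorelSpace G] (μ : Measure G) [μ.IsHaarMeasure] {φ : MulAut G}
    (hφ : Continuous φ) {Δ : ℝ} (hΔ : 0 < Δ) (hmod : ∀ s : Set G, μ (φ '' s) = .ofReal Δ * μ s)
    {U : Subgroup G} (hUo : IsOpen (U : Set G)) (hUc : IsCompact (U : Set G)) (m : ℕ) :
    Real.log (entIdx φ⁻¹ U (m + 1)) = Real.log (entIdx φ U (m + 1)) - m * Real.log Δ := by
  have h := congrArg ENNReal.toReal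
    (entIdx_eq_entIdx_inv_mul μ hφ (ENNReal.ofReal_pos.2 hΔ).ne' hmod hUo hUc m)
  rw [ENNReal.toReal_mul, ENNReal.toReal_pow, ENNReal.toReal_ofReal hΔ.le,
    ENNReal.toReal_natCast, ENNReal.toReal_natCast] at h
  have hne : (entIdx φ⁻¹ U (m + 1) : ℝ) * Δ ^ m ≠ 0 :=
    h ▸ Nat.cast_ne_zero.2 (entIdx_ne_zero hφ hUo hUc _)
  rw [h, Real.log_mul (left_ne_zero_of_mul hne) (right_ne_zero_of_mul hne), Real.log_pow]
  ring

theorem Htop_inv_eq_general [TopologicalSpace G] [IsTopologicalGroup G]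
    [TotallyDisconnectedSpace G] [MeasurableSpace G] [BorelSpace G]
    (μ : Measure G) [μ.IsHaarMeasure]
    (φ : MulAut G) (hφ : Continuous φ)
    (Δ : ℝ) (hΔ : 0 < Δ) (hmod : ∀ s : Set G, μ (⇑φ '' s) = ENNReal.ofReal Δ * μ s)
    (U : Subgroup G) (hUo : IsOpen (U : Set G)) (hUc : IsCompact (U : Set G)) :
    Htop φ⁻¹ U = Htop φ U - Real.log Δ := by
  set u : ℕ → ℝ := fun n => Real.log (entIdx φ U (n + 1)) / ↑(n + 1) with hu_def
  have hφU : (U.comap φ.toMonoidHom).relIndex U ≠ 0 :=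
    (Subgroup.isFiniteRelIndex_of_isOpen_of_isCompact (hUo.preimage hφ) hUc).relIndex_ne_zero
  have hu : IsBoundedUnder (· ≤ ·) atTop u := isBoundedUnder_of ⟨_, log_entIdx_succ_div_le φ U hφU⟩
  have hu' : IsBoundedUnder (· ≥ ·) atTop u :=
    isBoundedUnder_of ⟨0, fun n => div_nonneg (Real.log_natCast_nonneg _) (Nat.cast_nonneg _)⟩
  have hv : Tendsto (fun n : ℕ => -((n / (n + 1) : ℝ) * Real.log Δ)) atTop (𝓝 (-Real.log Δ)) := by
    simpa using ((tendsto_natCast_div_add_atTop (1 : ℝ)).mul_const (Real.log Δ)).neg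
  rw [Htop_eq_limsup_succ, Htop_eq_limsup_succ, sub_eq_add_neg, ← hu_def,
    ← limsup_add_of_tendsto hu hu' hv]
  congr 1
  funext n
  rw [Pi.add_apply, log_entIdx_inv_succ μ hφ hΔ hmod hUo hUc, hu_def]
  field_simp
  push_cast
  ring

theorem Htop_inv_eq [TopologicalSpace G] [IsTopologicalGroup G]
    [LocallyCompactSpace G] [TotallyDisconnectedSpace G] [MeasurableSpace G] [BorelSpace G]
    (μ : Measure G) [μ.IsHaarMeasure]
    (φ : MulAut G) (hφ : Continuous φ) (hφ' : Continuous φ⁻¹)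
    (Δ : ℝ) (hΔ : 0 < Δ) (hmod : ∀ s : Set G, μ (⇑φ '' s) = ENNReal.ofReal Δ * μ s)
    (U : Subgroup G) (hUo : IsOpen (U : Set G)) (hUc : IsCompact (U : Set G)) :
    Htop φ⁻¹ U = Htop φ U - Real.log Δ :=
  Htop_inv_eq_general μ φ hφ Δ hΔ hmod U hUo hUc
end

section
/- Let G be a totally disconnected locally compact group and φ : G → G a continuous endomorphism. If U ⊆ V are open compact subgroups of G, then H_top(φ,V) ≤ H_top(φ,U). -/
open Filter Topology

variable {G : Type*} [Group G]

/-- The `i`-th iterate `φ^i` of an endomorphism `φ`. -/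
def iterHom (φ : G →* G) : ℕ → (G →* G)
  | 0 => MonoidHom.id G
  | n + 1 => φ.comp (iterHom φ n)

/-- The `n`-th `φ`-cotrajectory `Cₙ(φ,U) = ⋂_{i<n} φ^{-i}(U)` for an endomorphism `φ`. -/
def cotrajNE (φ : G →* G) (U : Subgroup G) (n : ℕ) : Subgroup G :=
  ⨅ i ∈ Finset.range n, Subgroup.comap (iterHom φ i) U

/-- The topological entropy of `φ` with respect to `U`,
`H_top(φ,U) = lim_n log [U : Cₙ(φ,U)] / n` (the limit exists, so it equals the `limsup`). -/
noncomputable def HtopE (φ : G →* G) (U : Subgroup G) : ℝ :=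
  limsup (fun n : ℕ => Real.log ((cotrajNE φ U n).relIndex U) / n) atTop

/-!
The cotrajectories satisfy `Cₙ₊₂ = Cₙ₊₁ ∩ φ⁻¹(Cₙ₊₁)` and `φ(Cₙ₊₁) ≤ Cₙ`, so the successive
indices `[Cₙ : Cₙ₊₁]` decrease and `[U : Cₙ(φ,U)] ≤ [U : U ∩ φ⁻¹U]ⁿ`; hence `log [U : Cₙ] / n` is
bounded. For `U ≤ V` we have `Cₙ(φ,U) ≤ Cₙ(φ,V)`, so `[V : Cₙ(φ,V)] ≤ [U : Cₙ(φ,U)] [V : U]`, and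
the error term `log [V : U] / n` vanishes in the limit.
-/

theorem Filter.limsup_le_limsup_of_le_add_of_tendsto_zero {ι : Type*} {f : Filter ι} [f.NeBot]
    {u v w : ι → ℝ} (h : ∀ i, u i ≤ v i + w i) (hw : Tendsto w f (𝓝 0))
    (hu : IsCoboundedUnder (· ≤ ·) f u) (hv : IsBoundedUnder (· ≤ ·) f v)
    (hv' : IsBoundedUnder (· ≥ ·) f v) :
    limsup u f ≤ limsup v f :=
  calc limsup u f ≤ limsup (v + w) f :=
        limsup_le_limsup (.of_forall h) hu (isBoundedUnder_le_add hv hw.isBoundedUnder_le)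
    _ ≤ limsup v f + limsup w f := limsup_add_le hv' hv hw.isCoboundedUnder_le hw.isBoundedUnder_le
    _ = limsup v f := by rw [hw.limsup_eq, add_zero]

theorem Real.log_natCast_le_log_natCast {m n : ℕ} (h : m ≤ n) : Real.log m ≤ Real.log n := by
  rcases m.eq_zero_or_pos with rfl | hm
  · simpa using Real.log_natCast_nonneg n
  · exact Real.log_le_log (by exact_mod_cast hm) (by exact_mod_cast h)

theorem Subgroup.relIndex_le_relIndex_mul_relIndex {H H' U V : Subgroup G} (hHH' : H ≤ H')
    (hUV : U ≤ V) (hHU : H.relIndex U ≠ 0) (hUV' : U.relIndex V ≠ 0) :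
    H'.relIndex V ≤ H.relIndex U * U.relIndex V := by
  have h := relIndex_inf_mul_relIndex H U V
  rw [inf_of_le_left hUV] at h
  rw [h]
  exact relIndex_le_of_le_left (inf_le_left.trans hHH') (h ▸ mul_ne_zero hHU hUV')

theorem Subgroup.relIndex_ne_zero_of_isOpen_of_isCompact [TopologicalSpace G]
    [IsTopologicalGroup G] {H K : Subgroup G} (hH : IsOpen (H : Set G))
    (hK : IsCompact (K : Set G)) : H.relIndex K ≠ 0 := by
  have : CompactSpace K := isCompact_iff_compactSpace.mp hK
  have : Finite (K ⧸ H.subgroupOf K) :=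
    quotient_finite_of_isOpen _ (hH.preimage continuous_subtype_val)
  exact index_ne_zero_of_finite

section Cotrajectory

variable {φ : G →* G} {U V : Subgroup G} {n : ℕ}

theorem iterHom_succ_apply (x : G) : iterHom φ (n + 1) x = iterHom φ n (φ x) := by
  induction n with
  | zero => rfl
  | succ n ih => exact congrArg φ ih

theorem mem_cotrajNE {x : G} : x ∈ cotrajNE φ U n ↔ ∀ i < n, iterHom φ i x ∈ U := by
  simp [cotrajNE, Subgroup.mem_iInf]

theorem cotrajNE_zero : cotrajNE φ U 0 = ⊤ := by
  simp [cotrajNE]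

theorem cotrajNE_one : cotrajNE φ U 1 = U := by
  ext x
  simp [mem_cotrajNE, iterHom]

theorem cotrajNE_succ : cotrajNE φ U (n + 1) = U ⊓ (cotrajNE φ U n).comap φ := by
  ext x
  simp only [Subgroup.mem_inf, Subgroup.mem_comap, mem_cotrajNE, ← iterHom_succ_apply]
  refine ⟨fun h => ⟨h 0 n.succ_pos, fun i hi => h (i + 1) (by omega)⟩, ?_⟩
  rintro ⟨h₀, h⟩ (_ | i) hi
  exacts [h₀, h i (by omega)]

theorem cotrajNE_antitone : Antitone (cotrajNE φ U) :=
  fun _ _ hmn _ hx => mem_cotrajNE.mpr fun i hi => mem_cotrajNE.mp hx i (by omega)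

theorem cotrajNE_succ_le : cotrajNE φ U (n + 1) ≤ U := by
  simpa only [cotrajNE_one] using cotrajNE_antitone (φ := φ) (U := U) (Nat.le_add_left 1 n)

theorem cotrajNE_mono (hUV : U ≤ V) : cotrajNE φ U n ≤ cotrajNE φ V n :=
  fun _ hx => mem_cotrajNE.mpr fun i hi => hUV (mem_cotrajNE.mp hx i hi)

theorem map_cotrajNE_succ_le : (cotrajNE φ U (n + 1)).map φ ≤ cotrajNE φ U n :=
  Subgroup.map_le_iff_le_comap.mpr (cotrajNE_succ (φ := φ) ▸ inf_le_right)

theorem cotrajNE_succ_succ :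
    cotrajNE φ U (n + 2) = cotrajNE φ U (n + 1) ⊓ (cotrajNE φ U (n + 1)).comap φ := by
  have hle : (cotrajNE φ U (n + 1)).comap φ ≤ (cotrajNE φ U n).comap φ :=
    Subgroup.comap_mono (cotrajNE_antitone n.le_succ)
  calc cotrajNE φ U (n + 2) = U ⊓ (cotrajNE φ U (n + 1)).comap φ := cotrajNE_succ
    _ = U ⊓ (cotrajNE φ U n).comap φ ⊓ (cotrajNE φ U (n + 1)).comap φ := by
      rw [inf_assoc, inf_of_le_right hle]
    _ = _ := by rw [← cotrajNE_succ]

theorem isOpen_cotrajNE [TopologicalSpace G] (hφ : Continuous φ) (hU : IsOpen (U : Set G))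
    (n : ℕ) : IsOpen (cotrajNE φ U n : Set G) := by
  induction n with
  | zero => simp [cotrajNE_zero]
  | succ n ih =>
    rw [cotrajNE_succ, Subgroup.coe_inf, Subgroup.coe_comap]
    exact hU.inter (ih.preimage hφ)

end Cotrajectory

section Index

variable {φ : G →* G} {U V : Subgroup G}

theorem relIndex_cotrajNE_succ_succ_le {n : ℕ}
    (h : (cotrajNE φ U (n + 1)).relIndex (cotrajNE φ U n) ≠ 0) :
    (cotrajNE φ U (n + 2)).relIndex (cotrajNE φ U (n + 1)) ≤
      (cotrajNE φ U (n + 1)).relIndex (cotrajNE φ U n) := by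
  rw [cotrajNE_succ_succ, Subgroup.inf_relIndex_left, Subgroup.relIndex_comap]
  exact Subgroup.relIndex_le_of_le_right map_cotrajNE_succ_le h

variable (hfin : ∀ n, (cotrajNE φ U n).relIndex U ≠ 0)
include hfin

theorem relIndex_cotrajNE_succ_succ_le_two (n : ℕ) :
    (cotrajNE φ U (n + 2)).relIndex (cotrajNE φ U (n + 1)) ≤ (cotrajNE φ U 2).relIndex U := by
  induction n with
  | zero => rw [cotrajNE_one]
  | succ n ih =>
    refine (relIndex_cotrajNE_succ_succ_le ?_).trans ih
    exact mt (Subgroup.relIndex_eq_zero_of_le_right cotrajNE_succ_le) (hfin (n + 2))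

theorem relIndex_cotrajNE_le_pow (n : ℕ) :
    (cotrajNE φ U n).relIndex U ≤ (cotrajNE φ U 2).relIndex U ^ n := by
  have hs : 1 ≤ (cotrajNE φ U 2).relIndex U := Nat.one_le_iff_ne_zero.mpr (hfin 2)
  have hsucc : ∀ n, (cotrajNE φ U (n + 1)).relIndex U ≤ (cotrajNE φ U 2).relIndex U ^ n := by
    intro n
    induction n with
    | zero => simp [cotrajNE_one]
    | succ n ih =>
      rw [← Subgroup.relIndex_mul_relIndex _ _ _ (cotrajNE_antitone n.succ.le_succ)
        cotrajNE_succ_le, pow_succ']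
      exact Nat.mul_le_mul (relIndex_cotrajNE_succ_succ_le_two hfin n) ih
  rcases n with _ | n
  · simp [cotrajNE_zero]
  · exact (hsucc n).trans (Nat.pow_le_pow_right hs n.le_succ)

theorem log_relIndex_cotrajNE_div_le (n : ℕ) :
    Real.log ((cotrajNE φ U n).relIndex U) / n ≤ Real.log ((cotrajNE φ U 2).relIndex U) := by
  refine div_le_of_le_mul₀ n.cast_nonneg (Real.log_natCast_nonneg _) ?_
  calc Real.log ((cotrajNE φ U n).relIndex U)
      ≤ Real.log ((cotrajNE φ U 2).relIndex U ^ n : ℕ) :=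
        Real.log_natCast_le_log_natCast (relIndex_cotrajNE_le_pow hfin n)
    _ = _ := by rw [Nat.cast_pow, Real.log_pow, mul_comm]

theorem log_relIndex_cotrajNE_div_le_add (hUV : U ≤ V) (hUV' : U.relIndex V ≠ 0) (n : ℕ) :
    Real.log ((cotrajNE φ V n).relIndex V) / n ≤
      Real.log ((cotrajNE φ U n).relIndex U) / n + Real.log (U.relIndex V) / n := by
  rw [← add_div]
  refine div_le_div_of_nonneg_right ?_ n.cast_nonneg
  calc Real.log ((cotrajNE φ V n).relIndex V)
      ≤ Real.log ((cotrajNE φ U n).relIndex U * U.relIndex V : ℕ) :=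
        Real.log_natCast_le_log_natCast <| Subgroup.relIndex_le_relIndex_mul_relIndex
          (cotrajNE_mono hUV) hUV (hfin n) hUV'
    _ = _ := by rw [Nat.cast_mul, Real.log_mul (by exact_mod_cast hfin n) (by exact_mod_cast hUV')]

end Index

theorem Htop_antitone_general [TopologicalSpace G] [IsTopologicalGroup G]
    (φ : G →* G) (hφ : Continuous φ)
    (U V : Subgroup G) (hUo : IsOpen (U : Set G)) (hUc : IsCompact (U : Set G))
    (hVc : IsCompact (V : Set G)) (hUV : U ≤ V) :
    HtopE φ V ≤ HtopE φ U := by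
  have hfin : ∀ n, (cotrajNE φ U n).relIndex U ≠ 0 := fun n =>
    Subgroup.relIndex_ne_zero_of_isOpen_of_isCompact (isOpen_cotrajNE hφ hUo n) hUc
  have hUV' : U.relIndex V ≠ 0 := Subgroup.relIndex_ne_zero_of_isOpen_of_isCompact hUo hVc
  have hnonneg : ∀ (W : Subgroup G) (n : ℕ), 0 ≤ Real.log ((cotrajNE φ W n).relIndex W) / n :=
    fun _ n => div_nonneg (Real.log_natCast_nonneg _) n.cast_nonneg
  exact limsup_le_limsup_of_le_add_of_tendsto_zero
    (log_relIndex_cotrajNE_div_le_add hfin hUV hUV')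
    (tendsto_const_div_atTop_nhds_zero_nat _)
    (isCoboundedUnder_le_of_le atTop (hnonneg V))
    (isBoundedUnder_of ⟨_, log_relIndex_cotrajNE_div_le hfin⟩)
    (isBoundedUnder_of ⟨0, hnonneg U⟩)

theorem Htop_antitone [TopologicalSpace G] [IsTopologicalGroup G]
    [LocallyCompactSpace G] [TotallyDisconnectedSpace G]
    (φ : G →* G) (hφ : Continuous φ)
    (U V : Subgroup G) (hUo : IsOpen (U : Set G)) (hUc : IsCompact (U : Set G))
    (hVo : IsOpen (V : Set G)) (hVc : IsCompact (V : Set G)) (hUV : U ≤ V) :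
    HtopE φ V ≤ HtopE φ U :=
  Htop_antitone_general φ hφ U V hUo hUc hVc hUV
end
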